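/- arXiv:1705.00205 — 2 statements merged into one kernel-verified Lean document; each statement's English description precedes it below -/
import Mathlib

section
/- The action of G on S_G(X), defined by A ∈ gp iff g⁻¹A ∈ p, is jointly continuous: the map G × S_G(X) → S_G(X) is continuous. -/
open Pointwise

/-- A near filter on the open sets of a `G`-flow `X`: a family of nonempty open
subsets such that finite intersections of `U`-thickenings of its members are
nonempty, for every symmetric open neighborhood `U` of the identity. -/
def IsNearFilter (G : Type*) {X : Type*} [Group G] [TopologicalSpace G]
    [TopologicalSpace X] [MulAction G X] (F : Set (Set X)) : Prop :=
  (∀ A ∈ F, IsOpen A ∧ A.Nonempty) ∧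
  ∀ s : Finset (Set X), s.Nonempty → ↑s ⊆ F →
    ∀ U : Set G, IsOpen U → (1 : G) ∈ U → U⁻¹ = U →
      (⋂ A ∈ s, U • A).Nonempty

/-- A near ultrafilter is a maximal near filter. -/
def IsNearUltrafilter (G : Type*) {X : Type*} [Group G] [TopologicalSpace G]
    [TopologicalSpace X] [MulAction G X] (F : Set (Set X)) : Prop :=
  IsNearFilter G F ∧ ∀ F' : Set (Set X), IsNearFilter G F' → F ⊆ F' → F' ⊆ F

/-- The space `S_G(X)` of near ultrafilters on `X`. -/
def NearUltra (G X : Type*) [Group G] [TopologicalSpace G]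
    [TopologicalSpace X] [MulAction G X] : Type _ :=
  {F : Set (Set X) // IsNearUltrafilter G F}

/-- The topology on `S_G(X)` generated by the sets `N_A = {p | A ∉ p}`
for `A` a nonempty open subset of `X`. -/
def nearTopology (G X : Type*) [Group G] [TopologicalSpace G]
    [TopologicalSpace X] [MulAction G X] : TopologicalSpace (NearUltra G X) :=
  TopologicalSpace.generateFrom
    {N | ∃ A : Set X, IsOpen A ∧ A.Nonempty ∧ N = {p : NearUltra G X | A ∉ p.1}}

/-! If `g⁻¹A ∉ p`, maximality of `p` yields finitely many `B ∈ p` and a symmetric neighbourhood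
`U` of `1` with `U g⁻¹A ∩ ⋂ U B = ∅`. For a symmetric open `V` with `V V ⊆ U` the thickening
`C = V g⁻¹A` is still not in `p`, and `gV × N_C` is a neighbourhood of `(g, p)` mapped into `N_A`:
`(gv)⁻¹A ⊆ C` for `v ∈ V`, and near ultrafilters are closed under open supersets. -/

theorem exists_open_nhds_one_inv_eq_mul_subset {G : Type*} [Group G] [TopologicalSpace G]
    [IsTopologicalGroup G] {U : Set G} (hU : U ∈ nhds (1 : G)) :
    ∃ V : Set G, IsOpen V ∧ (1 : G) ∈ V ∧ V⁻¹ = V ∧ V * V ⊆ U := by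
  obtain ⟨W, hWo, hW1, hWU⟩ := exists_open_nhds_one_mul_subset hU
  refine ⟨W ∩ W⁻¹, hWo.inter hWo.inv, ⟨hW1, by simpa using hW1⟩, by simp [Set.inter_comm], ?_⟩
  exact (Set.mul_subset_mul Set.inter_subset_left Set.inter_subset_left).trans hWU

section NearUltrafilter

variable {G X : Type*} [Group G] [TopologicalSpace G] [TopologicalSpace X] [MulAction G X]
  {F : Set (Set X)}

theorem IsNearUltrafilter.mem_of_forall_inter_nonempty (hF : IsNearUltrafilter G F)
    {D : Set X} (hDo : IsOpen D) (hDne : D.Nonempty)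
    (h : ∀ s : Finset (Set X), ↑s ⊆ F → ∀ U : Set G, IsOpen U → (1 : G) ∈ U → U⁻¹ = U →
      (U • D ∩ ⋂ A ∈ s, U • A).Nonempty) :
    D ∈ F := by
  classical
  refine hF.2 (insert D F) ⟨?_, ?_⟩ (Set.subset_insert _ _) (Set.mem_insert _ _)
  · rintro A (rfl | hA)
    exacts [⟨hDo, hDne⟩, hF.1.1 A hA]
  · intro s _ hsF U hUo hU1 hUinv
    have hs : ↑(s.erase D) ⊆ F := fun A hA ↦
      (hsF (Finset.mem_erase.1 hA).2).resolve_left (Finset.mem_erase.1 hA).1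
    refine (h _ hs U hUo hU1 hUinv).mono fun x hx ↦ Set.mem_iInter₂.2 fun A hA ↦ ?_
    by_cases hAD : A = D
    · exact hAD ▸ hx.1
    · exact Set.mem_iInter₂.1 hx.2 A (Finset.mem_erase.2 ⟨hAD, hA⟩)

theorem IsNearUltrafilter.mem_of_superset (hF : IsNearUltrafilter G F) {E C : Set X}
    (hE : E ∈ F) (hC : IsOpen C) (hEC : E ⊆ C) : C ∈ F := by
  classical
  refine hF.mem_of_forall_inter_nonempty hC ((hF.1.1 E hE).2.mono hEC)
    fun s hsF U hUo hU1 hUinv ↦ ?_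
  have hs : ↑(insert E s) ⊆ F := by
    rw [Finset.coe_insert]
    exact Set.insert_subset hE hsF
  have := hF.1.2 _ (Finset.insert_nonempty _ _) hs U hUo hU1 hUinv
  rw [Finset.set_biInter_insert] at this
  exact this.mono (Set.inter_subset_inter_left _ (Set.smul_subset_smul_left hEC))

theorem IsNearUltrafilter.exists_smul_notMem [IsTopologicalGroup G]
    (hF : IsNearUltrafilter G F) {D : Set X} (hDo : IsOpen D) (hDne : D.Nonempty)
    (hD : D ∉ F) : ∃ V : Set G, IsOpen V ∧ (1 : G) ∈ V ∧ V⁻¹ = V ∧ V • D ∉ F := by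
  obtain ⟨s, hsF, U, hUo, hU1, hUinv, hempty⟩ : ∃ s : Finset (Set X), ↑s ⊆ F ∧
      ∃ U : Set G, IsOpen U ∧ (1 : G) ∈ U ∧ U⁻¹ = U ∧ ¬(U • D ∩ ⋂ A ∈ s, U • A).Nonempty := by
    contrapose! hD
    exact hF.mem_of_forall_inter_nonempty hDo hDne hD
  obtain ⟨V, hVo, hV1, hVinv, hVVU⟩ := exists_open_nhds_one_inv_eq_mul_subset (hUo.mem_nhds hU1)
  have hVU : V ⊆ U := (Set.subset_mul_left V hV1).trans hVVU
  refine ⟨V, hVo, hV1, hVinv, fun hVD ↦ hempty ?_⟩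
  have hs : ↑(insert (V • D) s) ⊆ F := by
    rw [Finset.coe_insert]
    exact Set.insert_subset hVD hsF
  have := hF.1.2 _ (Finset.insert_nonempty _ _) hs V hVo hV1 hVinv
  rw [Finset.set_biInter_insert, ← mul_smul] at this
  exact this.mono (Set.inter_subset_inter (Set.smul_subset_smul_right hVVU)
    (Set.biInter_mono subset_rfl fun A _ ↦ Set.smul_subset_smul_right hVU))

end NearUltrafilter

open Topology in
theorem isOpen_setOf_notMem_nearTopology {G X : Type*} [Group G] [TopologicalSpace G]
    [TopologicalSpace X] [MulAction G X] {A : Set X} (hAo : IsOpen A) (hAne : A.Nonempty) :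
    IsOpen[nearTopology G X] {p : NearUltra G X | A ∉ p.1} :=
  TopologicalSpace.isOpen_generateFrom_of_mem ⟨A, hAo, hAne, rfl⟩

theorem nearUltra_action_continuous_general
    {G X : Type*} [Group G] [TopologicalSpace G] [IsTopologicalGroup G]
    [TopologicalSpace X]
    [MulAction G X] [ContinuousSMul G X]
    (hact : ∀ (g : G) (p : NearUltra G X),
      IsNearUltrafilter G {A : Set X | g⁻¹ • A ∈ p.1}) :
    @Continuous (G × NearUltra G X) (NearUltra G X)
      (@instTopologicalSpaceProd _ _ _ (nearTopology G X)) (nearTopology G X)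
      (fun q => ⟨{A : Set X | q.1⁻¹ • A ∈ q.2.1}, hact q.1 q.2⟩) := by
  let _ : TopologicalSpace (NearUltra G X) := nearTopology G X
  refine continuous_generateFrom_iff.2 ?_
  rintro _ ⟨A, hAo, hAne, rfl⟩
  refine isOpen_iff_forall_mem_open.2 fun ⟨g, p⟩ hgp ↦ ?_
  have hDo : IsOpen (g⁻¹ • A) := hAo.smul g⁻¹
  obtain ⟨V, hVo, hV1, hVinv, hVp⟩ := p.2.exists_smul_notMem hDo hAne.smul_set hgp
  have hVDo : IsOpen (V • g⁻¹ • A) := hDo.smul_left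
  have hVDne : (V • g⁻¹ • A).Nonempty := Set.Nonempty.smul ⟨1, hV1⟩ hAne.smul_set
  refine ⟨(g • V) ×ˢ {q : NearUltra G X | V • g⁻¹ • A ∉ q.1}, ?_,
    (hVo.smul g).prod (isOpen_setOf_notMem_nearTopology hVDo hVDne), ⟨1, hV1, mul_one g⟩, hVp⟩
  rintro ⟨_, q⟩ ⟨⟨v, hv, rfl⟩, hq⟩ hmem
  have hsub : (g • v)⁻¹ • A ⊆ V • g⁻¹ • A := by
    rw [smul_eq_mul, mul_inv_rev, mul_smul]
    exact Set.smul_set_subset_smul (hVinv ▸ Set.inv_mem_inv.2 hv)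
  exact hq (q.2.mem_of_superset hmem hVDo hsub)

/-- The action of G on the space of near ultrafilters is jointly continuous. -/
theorem nearUltra_action_continuous
    {G X : Type*} [Group G] [TopologicalSpace G] [IsTopologicalGroup G]
    [TopologicalSpace X] [CompactSpace X] [T2Space X]
    [MulAction G X] [ContinuousSMul G X]
    (hact : ∀ (g : G) (p : NearUltra G X),
      IsNearUltrafilter G {A : Set X | g⁻¹ • A ∈ p.1}) :
    @Continuous (G × NearUltra G X) (NearUltra G X)
      (@instTopologicalSpaceProd _ _ _ (nearTopology G X)) (nearTopology G X)
      (fun q => ⟨{A : Set X | q.1⁻¹ • A ∈ q.2.1}, hact q.1 q.2⟩) :=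
  nearUltra_action_continuous_general hact
end

section
/- The map π_X : S_G(X) → X sending each near ultrafilter p to the unique point x_p all of whose neighborhoods lie in p is a continuous G-equivariant map; moreover, for every closed K ⊆ X, π_X⁻¹(K) = {p : A ∈ p for every open A ⊇ K}. -/
open Pointwise

/-!
Compactness of `X` together with the near-filter condition makes the closures of any two members
`A, B` of a near filter meet: a point of `⋂ U, closure (U • A ∩ U • B)` lies in
`closure A ∩ closure B` because the action is continuous. By regularity, `x_p` then lies in the
closure of every member of `p`. This makes `x_p` unique, hence equivariant, and puts `x_p` in a
closed `K` as soon as `p` contains every open superset of `K`. That description of `π⁻¹(K)` is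
an intersection of the closed sets `{p | A ∈ p}`, which gives continuity.
-/

section NearLimit

open Topology

variable {G X : Type*} [TopologicalSpace X]

/-- In the notation of the paper, `IsNearLimit p x` means `x = x_p`. -/
def IsNearLimit (p : Set (Set X)) (x : X) : Prop :=
  ∀ A : Set X, IsOpen A → x ∈ A → A ∈ p

variable [Group G] [MulAction G X]

theorem IsNearLimit.smul [ContinuousConstSMul G X] {p : Set (Set X)} {x : X}
    (hx : IsNearLimit p x) (g : G) :
    IsNearLimit {A : Set X | g⁻¹ • A ∈ p} (g • x) := fun A hA hxA =>
  hx (g⁻¹ • A) (hA.smul g⁻¹) (by simpa [Set.mem_smul_set_iff_inv_smul_mem] using hxA)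

variable [TopologicalSpace G]

theorem IsNearFilter.smul_inter_smul_nonempty {p : Set (Set X)} (hp : IsNearFilter G p)
    {A B : Set X} (hA : A ∈ p) (hB : B ∈ p) {U : Set G} (hU : IsOpen U) (h1 : (1 : G) ∈ U)
    (hsymm : U⁻¹ = U) : (U • A ∩ U • B).Nonempty := by
  classical
  have hAB : (↑({A, B} : Finset (Set X)) : Set (Set X)) ⊆ p := by
    simp [Set.insert_subset_iff, hA, hB]
  simpa using hp.2 {A, B} (Finset.insert_nonempty _ _) hAB U hU h1 hsymm

section ContinuousSMul

variable [ContinuousInv G] [ContinuousSMul G X]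

theorem mem_closure_of_forall_mem_closure_smul {D : Set X} {x : X}
    (h : ∀ U : Set G, IsOpen U → (1 : G) ∈ U → U⁻¹ = U → x ∈ closure (U • D)) :
    x ∈ closure D := by
  by_contra hxD
  have hopen : IsOpen {q : G × X | q.1 • q.2 ∈ (closure D)ᶜ} :=
    isClosed_closure.isOpen_compl.preimage continuous_smul
  obtain ⟨U, V, hU, hV, h1U, hxV, hUV⟩ :=
    isOpen_prod_iff.1 hopen 1 x (by simpa using hxD)
  have hsymm : (U ∩ U⁻¹)⁻¹ = U ∩ U⁻¹ := by rw [Set.inter_inv, inv_inv, Set.inter_comm]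
  obtain ⟨_, hyV, u, hu, a, haD, rfl⟩ :=
    mem_closure_iff.1 (h _ (hU.inter hU.inv) ⟨h1U, by simpa using h1U⟩ hsymm) V hV hxV
  -- `U • V` avoids `closure D`, yet `u⁻¹ ∈ U` pulls `u • a ∈ V` back to `a ∈ D`.
  exact hUV (show (u⁻¹, u • a) ∈ U ×ˢ V from ⟨hu.2, hyV⟩)
    (subset_closure (by simpa using haD))

variable [CompactSpace X]

theorem IsNearFilter.closure_inter_closure_nonempty {p : Set (Set X)} (hp : IsNearFilter G p)
    {A B : Set X} (hA : A ∈ p) (hB : B ∈ p) : (closure A ∩ closure B).Nonempty := by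
  let σ := {U : Set G // IsOpen U ∧ (1 : G) ∈ U ∧ U⁻¹ = U}
  have : Nonempty σ := ⟨⟨Set.univ, isOpen_univ, trivial, Set.inv_univ⟩⟩
  let C : σ → Set X := fun U => closure (U.1 • A ∩ U.1 • B)
  have hdir : Directed (· ⊇ ·) C := fun U V => by
    refine ⟨⟨U.1 ∩ V.1, U.2.1.inter V.2.1, ⟨U.2.2.1, V.2.2.1⟩, by
      rw [Set.inter_inv, U.2.2.2, V.2.2.2]⟩, ?_, ?_⟩ <;>
    · refine closure_mono (Set.inter_subset_inter ?_ ?_) <;>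
        exact Set.smul_subset_smul_right (by simp)
  obtain ⟨x, hx⟩ := IsCompact.nonempty_iInter_of_directed_nonempty_isCompact_isClosed C hdir
    (fun U => (hp.smul_inter_smul_nonempty hA hB U.2.1 U.2.2.1 U.2.2.2).closure)
    (fun _ => isClosed_closure.isCompact) (fun _ => isClosed_closure)
  rw [Set.mem_iInter] at hx
  exact ⟨x,
    mem_closure_of_forall_mem_closure_smul fun U hU h1 hsymm =>
      closure_mono Set.inter_subset_left (hx ⟨U, hU, h1, hsymm⟩),
    mem_closure_of_forall_mem_closure_smul fun U hU h1 hsymm =>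
      closure_mono Set.inter_subset_right (hx ⟨U, hU, h1, hsymm⟩)⟩

variable {p : Set (Set X)} {x : X}

theorem IsNearFilter.mem_closure_of_isNearLimit [RegularSpace X] (hp : IsNearFilter G p)
    (hx : IsNearLimit p x) {A : Set X} (hA : A ∈ p) : x ∈ closure A := by
  by_contra hxA
  obtain ⟨W, ⟨hxW, hW⟩, hWA⟩ :=
    (hasBasis_opens_closure x).mem_iff.1 (isClosed_closure.isOpen_compl.mem_nhds hxA)
  obtain ⟨y, hyA, hyW⟩ := hp.closure_inter_closure_nonempty hA (hx W hW hxW)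
  exact hWA hyW hyA

theorem IsNearFilter.eq_of_isNearLimit [T2Space X] (hp : IsNearFilter G p)
    (hx : IsNearLimit p x) {y : X} (hy : IsNearLimit p y) : x = y := by
  by_contra hxy
  obtain ⟨U, V, hU, hV, hxU, hyV, hUV⟩ := t2_separation hxy
  exact (hUV.closure_right hU).notMem_of_mem_left hxU
    (hp.mem_closure_of_isNearLimit hx (hy V hV hyV))

theorem IsNearFilter.mem_of_isNearLimit_of_forall_isOpen_superset [T2Space X]
    (hp : IsNearFilter G p) (hx : IsNearLimit p x) {K : Set X} (hK : IsClosed K)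
    (hKp : ∀ A : Set X, IsOpen A → K ⊆ A → A ∈ p) : x ∈ K := by
  by_contra hxK
  obtain ⟨A, hA, hKA, hAx⟩ :=
    normal_exists_closure_subset hK isOpen_compl_singleton (Set.subset_compl_singleton_iff.2 hxK)
  exact hAx (hp.mem_closure_of_isNearLimit hx (hKp A hA hKA)) rfl

end ContinuousSMul

theorem NearUltra.isClosed_setOf_mem {A : Set X} (hA : IsOpen A) :
    IsClosed[nearTopology G X] {p : NearUltra G X | A ∈ p.1} := by
  let _ := nearTopology G X
  rw [← isOpen_compl_iff]
  rcases A.eq_empty_or_nonempty with rfl | hne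
  · convert isOpen_univ
    exact Set.eq_univ_of_forall fun p hp => (p.2.1.1 ∅ hp).2.ne_empty rfl
  · exact TopologicalSpace.isOpen_generateFrom_of_mem ⟨A, hA, hne, rfl⟩

theorem NearUltra.isClosed_setOf_forall_isOpen_superset_mem (K : Set X) :
    IsClosed[nearTopology G X]
      {p : NearUltra G X | ∀ A : Set X, IsOpen A → K ⊆ A → A ∈ p.1} := by
  let _ := nearTopology G X
  simp only [Set.ofPred_forall]
  exact isClosed_iInter fun A => isClosed_iInter fun hA => isClosed_iInter fun _ =>
    NearUltra.isClosed_setOf_mem hA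

end NearLimit

/-- The canonical map from the space of near ultrafilters to X is a
continuous G-map, and the preimage of a closed set K consists of those p
containing every open set containing K. -/
theorem nearUltra_proj_continuous_equivariant
    {G X : Type*} [Group G] [TopologicalSpace G] [IsTopologicalGroup G]
    [TopologicalSpace X] [CompactSpace X] [T2Space X]
    [MulAction G X] [ContinuousSMul G X]
    (hact : ∀ (g : G) (p : NearUltra G X),
      IsNearUltrafilter G {A : Set X | g⁻¹ • A ∈ p.1})
    (π : NearUltra G X → X)
    (hπ : ∀ p : NearUltra G X, ∀ A : Set X, IsOpen A → π p ∈ A → A ∈ p.1) :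
    @Continuous (NearUltra G X) X (nearTopology G X) _ π ∧
    (∀ (g : G) (p : NearUltra G X),
      π ⟨{A : Set X | g⁻¹ • A ∈ p.1}, hact g p⟩ = g • π p) ∧
    (∀ K : Set X, IsClosed K →
      π ⁻¹' K = {p : NearUltra G X | ∀ A : Set X, IsOpen A → K ⊆ A → A ∈ p.1}) := by
  have hlim : ∀ p : NearUltra G X, IsNearLimit p.1 (π p) := hπ
  have hpre : ∀ K : Set X, IsClosed K →
      π ⁻¹' K = {p : NearUltra G X | ∀ A : Set X, IsOpen A → K ⊆ A → A ∈ p.1} :=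
    fun K hK => Set.ext fun p =>
      ⟨fun hp A hA hKA => hlim p A hA (hKA hp),
        p.2.1.mem_of_isNearLimit_of_forall_isOpen_superset (hlim p) hK⟩
  refine ⟨?_, fun g p => (hact g p).1.eq_of_isNearLimit (hlim _) ((hlim p).smul g), hpre⟩
  let _ := nearTopology G X
  refine continuous_iff_isClosed.2 fun K hK => ?_
  rw [hpre K hK]
  exact NearUltra.isClosed_setOf_forall_isOpen_superset_mem K
end
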